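/- arXiv:2507.20076 — 6 statements merged into one kernel-verified Lean document; each statement's English description precedes it below -/
import Mathlib

section
/- Let f : A → B and g : B → C be homomorphisms of abelian groups such that g is surjective and ker(g) = im(f) (i.e., the sequence A → B → C → 0 is exact). Suppose there exists a divisible subgroup D_A of A such that the quotient A/D_A has finite exponent, and a divisible subgroup D_C of C such that C/D_C has finite exponent. Then there exists a divisible subgroup D_B of B such that B/D_B has finite exponent. -/
/-- A subgroup `D` of an abelian group is divisible if every element of `D` is an
`n`-th multiple of an element of `D` for every `n ≥ 1`. -/
def AddSubgroup.IsDivisible {A : Type*} [AddCommGroup A] (D : AddSubgroup A) : Prop :=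
  ∀ x ∈ D, ∀ n : ℕ, 1 ≤ n → ∃ y ∈ D, n • y = x

/-- The quotient `A/D` has finite exponent iff some `m ≥ 1` multiplies all of `A` into `D`. -/
def AddSubgroup.QuotFiniteExponent {A : Type*} [AddCommGroup A] (D : AddSubgroup A) : Prop :=
  ∃ m : ℕ, 1 ≤ m ∧ ∀ x : A, m • x ∈ D

/-- Lemma 3.1: in an exact sequence `A → B → C → 0` of abelian groups, if both `A` and `C`
are (torsion of finite exponent)-by-divisible, then so is `B`. -/
theorem extension_of_finiteExponent_by_divisible
    {A B C : Type*} [AddCommGroup A] [AddCommGroup B] [AddCommGroup C]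
    (f : A →+ B) (g : B →+ C) (hg : Function.Surjective g)
    (hexact : g.ker = f.range)
    (hA : ∃ D : AddSubgroup A, D.IsDivisible ∧ D.QuotFiniteExponent)
    (hC : ∃ D : AddSubgroup C, D.IsDivisible ∧ D.QuotFiniteExponent) :
    ∃ D : AddSubgroup B, D.IsDivisible ∧ D.QuotFiniteExponent := by
  obtain ⟨DA, hDAdiv, mA, hmA, hmAq⟩ := hA
  obtain ⟨DC, hDCdiv, mC, hmC, hmCq⟩ := hC
  set B₁ : AddSubgroup B := DC.comap g with hB₁
  set L : AddSubgroup B := B₁.map (zsmulAddGroupHom (mA : ℤ)) with hL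
  refine ⟨L ⊔ DA.map f, ?_, mA * mC, Nat.one_le_iff_ne_zero.2 (by positivity), ?_⟩
  · -- divisibility
    intro x hx n hn
    rw [AddSubgroup.mem_sup] at hx
    obtain ⟨y, hy, z, hz, hyz⟩ := hx
    obtain ⟨b₁, hb₁, rfl⟩ := hy
    obtain ⟨a, ha, rfl⟩ := hz
    have hb₁' : g b₁ ∈ DC := hb₁
    obtain ⟨c, hc, hnc⟩ := hDCdiv (g b₁) hb₁' n hn
    obtain ⟨b₂, hb₂⟩ := hg c
    have hb₂mem : b₂ ∈ B₁ := by simp [hB₁, AddSubgroup.mem_comap, hb₂, hc]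
    have hker : b₁ - n • b₂ ∈ g.ker := by
      simp [AddMonoidHom.mem_ker, map_sub, map_nsmul, hb₂, hnc]
    rw [hexact] at hker
    obtain ⟨a', ha'⟩ := hker
    have hmAa' : mA • a' ∈ DA := hmAq a'
    obtain ⟨a'', ha'', hna''⟩ := hDAdiv (mA • a') hmAa' n hn
    obtain ⟨a₃, ha₃, hna₃⟩ := hDAdiv a ha n hn
    refine ⟨(mA : ℤ) • b₂ + f (a'' + a₃), ?_, ?_⟩
    · refine AddSubgroup.add_mem _ (AddSubgroup.mem_sup_left ?_) (AddSubgroup.mem_sup_right ?_)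
      · exact ⟨b₂, hb₂mem, rfl⟩
      · exact ⟨a'' + a₃, DA.add_mem ha'' ha₃, rfl⟩
    · have hb₁eq : b₁ = n • b₂ + f a' := by rw [ha']; abel
      have e1 : f (mA • a') = n • f a'' := by rw [← map_nsmul, hna'']
      have e2 : f a = n • f a₃ := by rw [← map_nsmul, hna₃]
      rw [← hyz, zsmulAddGroupHom_apply]
      simp only [natCast_zsmul]
      rw [hb₁eq, e2]
      calc n • (mA • b₂ + f (a'' + a₃))
          = mA • (n • b₂) + (n • f a'' + n • f a₃) := by
            simp only [natCast_zsmul, smul_add, map_add, smul_comm n mA]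
        _ = mA • (n • b₂) + (f (mA • a') + n • f a₃) := by rw [e1]
        _ = mA • (n • b₂ + f a') + n • f a₃ := by rw [smul_add, map_nsmul]; abel
      
  · -- finite exponent
    intro x
    have h1 : mC • x ∈ B₁ := by
      simp only [hB₁, AddSubgroup.mem_comap, map_nsmul]
      exact hmCq (g x)
    refine AddSubgroup.mem_sup_left ?_
    exact ⟨mC • x, h1, by rw [zsmulAddGroupHom_apply, natCast_zsmul, smul_smul]⟩
end

section
/- Let p be a prime number and let K be a finite field extension of ℚ_p, equipped with its canonical topology; give Kˣ the subspace topology and (Kˣ)^r the product topology. Let f : (Kˣ)^r → (Kˣ)^r be a continuous group endomorphism. If the cokernel (Kˣ)^r / im(f) is finite, then the kernel ker(f) is finite. -/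
/-!
The subgroups `Hₖ = G ^ (p ^ k)` of `G = (Kˣ)ʳ` are stable under every endomorphism and have
finite index: the `m`-th powers form an open subgroup of `Kˣ`, and `Kˣ` is generated by a compact
annulus. They also meet in a finite group: an element of `Kˣ` with `p ^ k`-th roots for all `k`
has norm one; by compactness of the unit sphere a fixed power `c` of every norm-one element lies
in the disc around `1` on which `x ↦ x ^ p` contracts, so such an element is a `c`-th root of
unity. On the finite quotient `G ⧸ Hₖ` the endomorphism induced by `f` has kernel and cokernel of
equal size, so `ker f ⊓ Hₖ` has index at most `[G : im f]` in `ker f`; this chain stabilises at a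
subgroup of the finite group `⋂ₖ Hₖ`.
-/

open Filter Metric Topology

namespace Subgroup

variable {G : Type*} [Group G]

theorem exists_iInf_eq_of_antitone_of_index_le {H : ℕ → Subgroup G} (hH : Antitone H)
    (hfin : ∀ n, (H n).FiniteIndex) {c : ℕ} (hc : ∀ n, (H n).index ≤ c) :
    ∃ N, ⨅ n, H n = H N := by
  have hbdd : BddAbove (Set.range fun n => (H n).index) :=
    ⟨c, by rintro _ ⟨n, rfl⟩; exact hc n⟩
  obtain ⟨N, hN⟩ := Nat.sSup_mem (Set.range_nonempty _) hbdd
  refine ⟨N, le_antisymm (iInf_le _ N) (le_iInf fun n => ?_)⟩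
  rcases le_total n N with h | h
  · exact hH h
  · refine ((hH h).eq_of_not_lt fun hlt => ?_).ge
    have := (index_strictAnti hlt).trans_le (hN ▸ le_csSup hbdd ⟨n, rfl⟩)
    exact this.false

end Subgroup

namespace MonoidHom

open Subgroup

variable {G : Type*} [Group G]

theorem relIndex_ker_le_index_range (f : G →* G) (H : Subgroup G) [H.Normal] [H.FiniteIndex]
    (hH : H ≤ H.comap f) [f.range.FiniteIndex] : H.relIndex f.ker ≤ f.range.index := by
  let fbar := QuotientGroup.map H H f hH
  let ρ := (QuotientGroup.mk' H).comp f.ker.subtype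
  have hρ : ρ.range ≤ fbar.ker := by
    rintro _ ⟨x, rfl⟩
    simp [ρ, fbar, MonoidHom.mem_ker.mp x.2]
  have hrange : f.range.map (QuotientGroup.mk' H) ≤ fbar.range := by
    rintro _ ⟨_, ⟨x, rfl⟩, rfl⟩
    exact ⟨x, rfl⟩
  calc H.relIndex f.ker = Nat.card ρ.range := by
        rw [relIndex, ← index_ker, ← MonoidHom.comap_ker, QuotientGroup.ker_mk']; rfl
    _ ≤ Nat.card fbar.ker := card_le_of_le hρ
    _ = fbar.range.index := index_range.symm
    _ ≤ (f.range.map (QuotientGroup.mk' H)).index := by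
        have : (f.range.map (QuotientGroup.mk' H)).FiniteIndex :=
          ⟨fun h => FiniteIndex.index_ne_zero (Nat.eq_zero_of_zero_dvd
            (h ▸ index_map_dvd _ (QuotientGroup.mk'_surjective H)))⟩
        exact index_antitone hrange
    _ ≤ f.range.index :=
        Nat.le_of_dvd (Nat.pos_of_ne_zero FiniteIndex.index_ne_zero)
          (index_map_dvd _ (QuotientGroup.mk'_surjective H))

theorem finite_ker_of_finiteIndex_range (f : G →* G) [f.range.FiniteIndex]
    {H : ℕ → Subgroup G} (hH : Antitone H) (hnormal : ∀ n, (H n).Normal)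
    (hfin : ∀ n, (H n).FiniteIndex) (hstable : ∀ n, H n ≤ (H n).comap f)
    (hinf : Finite ↥(⨅ n, H n)) : Finite f.ker := by
  obtain ⟨N, hN⟩ := exists_iInf_eq_of_antitone_of_index_le
    (H := fun n => (H n).subgroupOf f.ker) (fun m n hmn => subgroupOf_mono _ (hH hmn))
    (fun n => inferInstance) (fun n => f.relIndex_ker_le_index_range (H n) (hstable n))
  have hfinN : Finite ((H N).subgroupOf f.ker) := by
    rw [← hN]
    refine Finite.of_injective (fun x => (⟨x.1.1, ?_⟩ : ↥(⨅ n, H n))) fun x y hxy => ?_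
    · exact mem_iInf.2 fun n => mem_subgroupOf.1 (mem_iInf.1 x.2 n)
    · exact Subtype.ext (Subtype.ext (congrArg Subtype.val hxy :))
  have := hfin N
  exact (finite_iff_finite_and_finiteIndex ((H N).subgroupOf f.ker)).2 ⟨hfinN, inferInstance⟩

end MonoidHom

section PowRange

variable {G : Type*} [CommGroup G]

theorem range_powMonoidHom_le_of_dvd {m n : ℕ} (h : m ∣ n) :
    (powMonoidHom n : G →* G).range ≤ (powMonoidHom m).range := by
  obtain ⟨k, rfl⟩ := h
  rintro _ ⟨x, rfl⟩
  exact ⟨x ^ k, by simp [← pow_mul, mul_comm]⟩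

theorem range_powMonoidHom_le_comap (f : G →* G) (n : ℕ) :
    (powMonoidHom n : G →* G).range ≤ (powMonoidHom n).range.comap f := by
  rintro _ ⟨x, rfl⟩
  exact ⟨f x, by simp⟩

theorem range_powMonoidHom_pi (ι : Type*) (n : ℕ) :
    (powMonoidHom n : (ι → G) →* (ι → G)).range =
      Subgroup.pi Set.univ fun _ => (powMonoidHom n : G →* G).range := by
  ext x
  simp only [MonoidHom.mem_range, powMonoidHom_apply, Subgroup.mem_pi, Set.mem_univ,
    true_implies, funext_iff, Pi.pow_apply]
  exact (Classical.skolem (p := fun i y => y ^ n = x i)).symm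

theorem finiteIndex_range_powMonoidHom_pi (ι : Type*) [Finite ι] (n : ℕ)
    [(powMonoidHom n : G →* G).range.FiniteIndex] :
    (powMonoidHom n : (ι → G) →* (ι → G)).range.FiniteIndex := by
  have := Fintype.ofFinite ι
  rw [range_powMonoidHom_pi, Subgroup.finiteIndex_iff, Subgroup.index_pi]
  exact Finset.prod_ne_zero_iff.2 fun _ _ => Subgroup.FiniteIndex.index_ne_zero

theorem finite_iInf_range_powMonoidHom_pi (ι : Type*) [Finite ι] (m : ℕ → ℕ)
    [Finite ↥(⨅ k, (powMonoidHom (m k) : G →* G).range)] :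
    Finite ↥(⨅ k, (powMonoidHom (m k) : (ι → G) →* (ι → G)).range) := by
  refine Finite.of_injective (β := ι → ↥(⨅ k, (powMonoidHom (m k) : G →* G).range))
    (fun x i => ⟨x.1 i, Subgroup.mem_iInf.2 fun k => ?_⟩) fun x y hxy => ?_
  · obtain ⟨y, hy⟩ := Subgroup.mem_iInf.1 x.2 k
    exact ⟨y i, congrFun hy i⟩
  · exact Subtype.ext (funext fun i => congrArg Subtype.val (congrFun hxy i))

end PowRange

namespace Subgroup

variable {G : Type*} [CommGroup G] [TopologicalSpace G] [SeparatelyContinuousMul G]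

theorem quotient_finite_of_isOpen_of_closure_eq_top {A : Set G} (hA : IsCompact A)
    (hgen : closure A = ⊤) {U : Subgroup G} (hU : IsOpen (U : Set G))
    (htors : IsMulTorsion (G ⧸ U)) : Finite (G ⧸ U) := by
  have := QuotientGroup.discreteTopology hU
  have hfin : (QuotientGroup.mk' U '' A).Finite :=
    (hA.image QuotientGroup.continuous_mk).finite_of_discrete
  have : Group.FG (G ⧸ U) := Group.fg_iff.2 ⟨_, by
    rw [← MonoidHom.map_closure, hgen, ← MonoidHom.range_eq_map,
      MonoidHom.range_eq_top.2 (QuotientGroup.mk'_surjective U)], hfin⟩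
  exact CommGroup.finite_of_fg_isMulTorsion _ htors

theorem exists_pow_mem_of_isOpen [CompactSpace G] {V : Subgroup G} (hV : IsOpen (V : Set G)) :
    ∃ c, 0 < c ∧ ∀ g : G, g ^ c ∈ V := by
  have := quotient_finite_of_isOpen V hV
  obtain ⟨c, hc, hpow⟩ := Monoid.ExponentExists.of_finite (G := G ⧸ V)
  exact ⟨c, hc, fun g => (QuotientGroup.eq_one_iff _).1 (hpow g)⟩

end Subgroup

namespace Units

variable {K : Type*}

theorem range_powMonoidHom_mem_nhds_one [NontriviallyNormedField K] [CompleteSpace K]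
    {m : ℕ} (hm : (m : K) ≠ 0) : ((powMonoidHom m : Kˣ →* Kˣ).range : Set Kˣ) ∈ 𝓝 1 := by
  have hmap : Filter.map (fun x : K => x ^ m) (𝓝 1) = 𝓝 1 := by
    simpa using (hasStrictDerivAt_pow m (1 : K)).map_nhds_eq (by simpa using hm)
  have hpow : (fun x : K => x ^ m) '' {0}ᶜ ∈ 𝓝 (1 : K) :=
    hmap ▸ image_mem_map (isOpen_compl_singleton.mem_nhds one_ne_zero)
  rw [isEmbedding_val₀.isInducing.nhds_eq_comap]
  refine mem_comap.2 ⟨_, hpow, ?_⟩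
  rintro u ⟨x, hx, hxu⟩
  exact ⟨mk0 x hx, Units.ext (by simpa only [powMonoidHom_apply, val_pow_eq_pow_val, val_mk0])⟩

theorem closure_annulus_eq_top [NormedField K] {π : K} (hπ0 : 0 < ‖π‖) (hπ1 : ‖π‖ < 1) :
    Subgroup.closure (val ⁻¹' (closedBall (0 : K) 1 \ ball 0 ‖π‖)) = ⊤ := by
  have hmem : ∀ u : Kˣ, ‖π‖ ≤ ‖(u : K)‖ → ‖(u : K)‖ ≤ 1 →
      u ∈ Subgroup.closure (val ⁻¹' (closedBall (0 : K) 1 \ ball 0 ‖π‖)) :=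
    fun u h1 h2 => Subgroup.subset_closure ⟨by simpa using h2, by simpa using h1⟩
  let ϖ := mk0 π (norm_pos_iff.1 hπ0)
  refine eq_top_iff.2 fun u _ => ?_
  obtain ⟨k, hk1, hk2⟩ :=
    exists_mem_Ico_zpow (norm_pos_iff.2 u.ne_zero) ((one_lt_inv₀ hπ0).2 hπ1)
  have hpos : 0 < ‖π‖ ^ (k + 1) := zpow_pos hπ0 _
  have hnorm : ‖((u * ϖ ^ (k + 1) : Kˣ) : K)‖ = ‖(u : K)‖ * ‖π‖ ^ (k + 1) := by
    simp [ϖ, norm_zpow]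
  have hlow : ‖π‖ ≤ ‖(u : K)‖ * ‖π‖ ^ (k + 1) :=
    calc ‖π‖ = ‖π‖⁻¹ ^ k * ‖π‖ ^ (k + 1) := by
          rw [inv_zpow', ← zpow_add₀ hπ0.ne']; simp
      _ ≤ ‖(u : K)‖ * ‖π‖ ^ (k + 1) := mul_le_mul_of_nonneg_right hk1 hpos.le
  have hup : ‖(u : K)‖ * ‖π‖ ^ (k + 1) ≤ 1 :=
    calc ‖(u : K)‖ * ‖π‖ ^ (k + 1) ≤ ‖π‖⁻¹ ^ (k + 1) * ‖π‖ ^ (k + 1) :=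
          mul_le_mul_of_nonneg_right hk2.le hpos.le
      _ = 1 := by rw [inv_zpow, inv_mul_cancel₀ hpos.ne']
  have hu : u = (u * ϖ ^ (k + 1)) * ϖ ^ (-(k + 1)) := by group
  rw [hu]
  exact mul_mem (hmem _ (hnorm ▸ hlow) (hnorm ▸ hup))
    (zpow_mem (hmem ϖ le_rfl hπ1.le) _)

theorem finite_quotient_range_powMonoidHom [NontriviallyNormedField K] [ProperSpace K]
    {m : ℕ} (hm : (m : K) ≠ 0) : Finite (Kˣ ⧸ (powMonoidHom m : Kˣ →* Kˣ).range) := by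
  obtain ⟨π, hπ0, hπ1⟩ := NormedField.exists_norm_lt_one K
  refine Subgroup.quotient_finite_of_isOpen_of_closure_eq_top ?_ (closure_annulus_eq_top hπ0 hπ1)
    (Subgroup.isOpen_of_mem_nhds _ (range_powMonoidHom_mem_nhds_one hm)) fun g => ?_
  · refine isEmbedding_val₀.isInducing.isCompact_preimage'
      ((isCompact_closedBall 0 1).diff isOpen_ball) fun x hx => ?_
    have hx0 : x ≠ 0 := by
      rintro rfl
      exact hx.2 (mem_ball_self hπ0)
    exact ⟨mk0 x hx0, rfl⟩
  · induction g using QuotientGroup.induction_on with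
    | H x =>
      have hm0 : 0 < m := Nat.pos_of_ne_zero fun h => hm (by simp [h])
      refine isOfFinOrder_iff_pow_eq_one.2 ⟨m, hm0, ?_⟩
      rw [← QuotientGroup.mk_pow, QuotientGroup.eq_one_iff]
      exact ⟨x, rfl⟩

end Units

namespace IsUltrametricDist

section NormedRing

variable {R : Type*} [NormedRing R] [NormOneClass R] [IsUltrametricDist R]

theorem norm_pow_sub_one_le {x : R} (hx : ‖x‖ ≤ 1) (n : ℕ) : ‖x ^ n - 1‖ ≤ ‖x - 1‖ := by
  have hsum : ‖∑ i ∈ Finset.range n, x ^ i‖ ≤ 1 :=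
    norm_sum_le_of_forall_le_of_nonneg zero_le_one fun i _ =>
      (_root_.norm_pow_le x i).trans (pow_le_one₀ (norm_nonneg x) hx)
  rw [← geom_sum_mul]
  simpa using _root_.norm_mul_le_of_le hsum le_rfl

theorem norm_pow_sub_one_le_mul {x : R} {n : ℕ} (hx : ‖x - 1‖ ≤ ‖(n : R)‖) :
    ‖x ^ n - 1‖ ≤ ‖(n : R)‖ * ‖x - 1‖ := by
  have hn : ‖(n : R)‖ ≤ 1 := norm_natCast_le_one R n
  have hx1 : ‖x‖ ≤ 1 := by
    simpa using (norm_add_le_max (x - 1) 1).trans (max_le (hx.trans hn) norm_one.le)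
  have hsum : ∑ i ∈ Finset.range n, x ^ i = ∑ i ∈ Finset.range n, (x ^ i - 1) + n := by
    simp
  have hsum_le : ‖∑ i ∈ Finset.range n, x ^ i‖ ≤ ‖(n : R)‖ := by
    rw [hsum]
    refine (norm_add_le_max _ _).trans (max_le ?_ le_rfl)
    exact norm_sum_le_of_forall_le_of_nonneg (norm_nonneg _) fun i _ =>
      (norm_pow_sub_one_le hx1 i).trans hx
  rw [← geom_sum_mul]
  exact _root_.norm_mul_le_of_le hsum_le le_rfl

theorem norm_pow_pow_sub_one_le {x : R} {n : ℕ} (hx : ‖x - 1‖ ≤ ‖(n : R)‖) (k : ℕ) :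
    ‖x ^ n ^ k - 1‖ ≤ ‖(n : R)‖ ^ k * ‖x - 1‖ := by
  have hn : ‖(n : R)‖ ≤ 1 := norm_natCast_le_one R n
  induction k with
  | zero => simp
  | succ k ih =>
    have hk : ‖x ^ n ^ k - 1‖ ≤ ‖(n : R)‖ :=
      ih.trans ((mul_le_of_le_one_left (norm_nonneg _) (pow_le_one₀ (norm_nonneg _) hn)).trans hx)
    calc ‖x ^ n ^ (k + 1) - 1‖ = ‖(x ^ n ^ k) ^ n - 1‖ := by rw [pow_succ, pow_mul]
      _ ≤ ‖(n : R)‖ * ‖x ^ n ^ k - 1‖ := norm_pow_sub_one_le_mul hk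
      _ ≤ ‖(n : R)‖ * (‖(n : R)‖ ^ k * ‖x - 1‖) := by gcongr
      _ = ‖(n : R)‖ ^ (k + 1) * ‖x - 1‖ := by ring

end NormedRing

section NormedField

variable {K : Type*} [NormedField K] [IsUltrametricDist K]

def closedBallOneSubgroup {r : ℝ} (hr : 0 ≤ r) : Subgroup (sphere (0 : K) 1) where
  carrier := {z | ‖(z : K) - 1‖ ≤ r}
  one_mem' := by simpa using hr
  mul_mem' := by
    intro a b ha hb
    have hab : ((a * b : sphere (0 : K) 1) : K) - 1 = a * ((b : K) - 1) + ((a : K) - 1) := by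
      rw [Metric.unitSphere.coe_mul]; ring
    simp only [Set.mem_ofPred_eq, hab]
    refine (norm_add_le_max _ _).trans (max_le ?_ ha)
    rwa [norm_mul, norm_eq_of_mem_sphere a, one_mul]
  inv_mem' := by
    intro a ha
    have ha0 : (a : K) ≠ 0 := ne_zero_of_mem_unit_sphere a
    have hinv : ((a⁻¹ : sphere (0 : K) 1) : K) - 1 = (a : K)⁻¹ * (1 - a) := by
      rw [Metric.unitSphere.coe_inv]; field_simp
    simp only [Set.mem_ofPred_eq, hinv, norm_mul, norm_inv, norm_eq_of_mem_sphere a, inv_one,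
      one_mul, norm_sub_rev]
    exact ha

theorem isOpen_closedBallOneSubgroup {r : ℝ} (hr : 0 ≤ r) (hr0 : r ≠ 0) :
    IsOpen ((closedBallOneSubgroup hr : Subgroup (sphere (0 : K) 1)) : Set (sphere (0 : K) 1)) := by
  convert (isOpen_closedBall (1 : K) hr0).preimage continuous_subtype_val using 1
  ext z
  simp [closedBallOneSubgroup, dist_eq_norm]

variable [ProperSpace K]

theorem exists_isMaxOn_norm_ball : ∃ x₀ ∈ ball (0 : K) 1, IsMaxOn norm (ball (0 : K) 1) x₀ :=
  ((isCompact_closedBall 0 1).of_isClosed_subset (isClosed_ball 0 1)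
    ball_subset_closedBall).exists_isMaxOn ⟨0, mem_ball_self one_pos⟩ continuous_norm.continuousOn

theorem norm_eq_one_of_forall_exists_pow_eq {u : K} (hu : u ≠ 0)
    (h : ∀ N : ℕ, ∃ m ≥ N, ∃ y : K, y ^ m = u) : ‖u‖ = 1 := by
  obtain ⟨x₀, hx₀, hmax⟩ := exists_isMaxOn_norm_ball (K := K)
  have hx₀1 : ‖x₀‖ < 1 := by simpa using hx₀
  have key : ∀ v : K, v ≠ 0 → (∀ N : ℕ, ∃ m ≥ N, ∃ y : K, y ^ m = v) → 1 ≤ ‖v‖ := by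
    intro v hv hroots
    by_contra! hv1
    have hle : ∀ N : ℕ, ‖v‖ ≤ ‖x₀‖ ^ N := by
      intro N
      obtain ⟨m, hm, y, rfl⟩ := hroots N
      have hy : ‖y‖ < 1 := by
        by_contra! hy
        exact hv1.not_ge (by simpa [norm_pow] using one_le_pow₀ (n := m) hy)
      have hy' : ‖y‖ ≤ ‖x₀‖ := hmax (by simpa using hy)
      calc ‖y ^ m‖ = ‖y‖ ^ m := norm_pow y m
        _ ≤ ‖x₀‖ ^ m := pow_le_pow_left₀ (norm_nonneg y) hy' m
        _ ≤ ‖x₀‖ ^ N := pow_le_pow_of_le_one (norm_nonneg _) hx₀1.le hm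
    have := ge_of_tendsto' (tendsto_pow_atTop_nhds_zero_of_lt_one (norm_nonneg _) hx₀1) hle
    exact hv (norm_le_zero_iff.1 this)
  refine le_antisymm ?_ (key u hu h)
  have := key u⁻¹ (inv_ne_zero hu) fun N =>
    (h N).imp fun m ⟨hm, y, hy⟩ => ⟨hm, y⁻¹, by rw [inv_pow, hy]⟩
  rwa [norm_inv, one_le_inv₀ (norm_pos_iff.2 hu)] at this

theorem finite_iInf_range_powMonoidHom_pow {n : ℕ} (hn0 : (n : K) ≠ 0) (hn1 : ‖(n : K)‖ < 1) :
    Finite ↥(⨅ k, (powMonoidHom (n ^ k) : Kˣ →* Kˣ).range) := by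
  have hn : 1 < n := by
    rcases n with _ | _ | n
    · simp at hn0
    · simp at hn1
    · omega
  have hnorm : ∀ u ∈ ⨅ k, (powMonoidHom (n ^ k) : Kˣ →* Kˣ).range, ‖(u : K)‖ = 1 := by
    intro u hu
    refine norm_eq_one_of_forall_exists_pow_eq u.ne_zero fun N =>
      ⟨n ^ N, (Nat.lt_pow_self hn).le, ?_⟩
    obtain ⟨y, hy⟩ := Subgroup.mem_iInf.1 hu N
    exact ⟨y, by rw [← hy]; simp⟩
  obtain ⟨c, hc, hpow⟩ :=
    Subgroup.exists_pow_mem_of_isOpen <|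
      isOpen_closedBallOneSubgroup (K := K) (norm_nonneg (n : K)) (norm_ne_zero_iff.2 hn0)
  have hroot : ⨅ k, (powMonoidHom (n ^ k) : Kˣ →* Kˣ).range ≤ rootsOfUnity c K := by
    intro u hu
    rw [mem_rootsOfUnity]
    have hle : ∀ k : ℕ, ‖((u ^ c : Kˣ) : K) - 1‖ ≤ ‖(n : K)‖ ^ k * ‖(n : K)‖ := by
      intro k
      obtain ⟨y, rfl⟩ := Subgroup.mem_iInf.1 hu k
      have hy : ‖(y : K)‖ = 1 := by
        have := hnorm _ hu
        simp only [powMonoidHom_apply, Units.val_pow_eq_pow_val, norm_pow] at this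
        exact (pow_eq_one_iff_of_nonneg (norm_nonneg _) (pow_ne_zero k (by omega))).1 this
      have hyc : ‖(y : K) ^ c - 1‖ ≤ ‖(n : K)‖ := by
        simpa [closedBallOneSubgroup] using hpow ⟨y, by simpa using hy⟩
      calc ‖(((powMonoidHom (n ^ k) y) ^ c : Kˣ) : K) - 1‖
          = ‖((y : K) ^ c) ^ n ^ k - 1‖ := by
            simp only [powMonoidHom_apply, Units.val_pow_eq_pow_val, ← pow_mul, mul_comm]
        _ ≤ ‖(n : K)‖ ^ k * ‖(y : K) ^ c - 1‖ := norm_pow_pow_sub_one_le hyc k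
        _ ≤ ‖(n : K)‖ ^ k * ‖(n : K)‖ := by gcongr
    have hlim : Tendsto (fun k : ℕ => ‖(n : K)‖ ^ k * ‖(n : K)‖) atTop (𝓝 0) := by
      simpa using
        (tendsto_pow_atTop_nhds_zero_of_lt_one (norm_nonneg _) hn1).mul_const ‖(n : K)‖
    exact Units.ext (sub_eq_zero.1 (norm_le_zero_iff.1 (ge_of_tendsto' hlim hle)))
  have : NeZero c := ⟨hc.ne'⟩
  exact Finite.of_injective _ (Subgroup.inclusion_injective hroot)

end NormedField

end IsUltrametricDist

theorem finite_kernel_of_finite_cokernel_padic_general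
    (p : ℕ) [Fact p.Prime] (K : Type*) [NormedField K] [NormedAlgebra ℚ_[p] K]
    [FiniteDimensional ℚ_[p] K]
    (r : ℕ)
    (f : (Fin r → Kˣ) →* (Fin r → Kˣ))
    (hcoker : Finite ((Fin r → Kˣ) ⧸ f.range)) :
    Finite f.ker := by
  have hp : ‖(p : K)‖ = (p : ℝ)⁻¹ := by
    rw [← map_natCast (algebraMap ℚ_[p] K), norm_algebraMap', Padic.norm_p]
  have hp_one : (1 : ℝ) < p := mod_cast (Fact.out : p.Prime).one_lt
  have hp1 : ‖(p : K)‖ < 1 := hp ▸ inv_lt_one_of_one_lt₀ hp_one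
  have hp0 : (p : K) ≠ 0 := norm_ne_zero_iff.1 (hp ▸ (inv_pos.2 (zero_lt_one.trans hp_one)).ne')
  let : NontriviallyNormedField K := .ofNormNeOne ⟨p, hp0, hp1.ne⟩
  have : IsUltrametricDist K := .of_normedAlgebra ℚ_[p]
  have : ProperSpace K := FiniteDimensional.proper ℚ_[p] K
  have : f.range.FiniteIndex := Subgroup.finiteIndex_of_finite_quotient
  have (k : ℕ) : (powMonoidHom (p ^ k) : Kˣ →* Kˣ).range.FiniteIndex :=
    have := Units.finite_quotient_range_powMonoidHom (m := p ^ k)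
      (by push_cast; exact pow_ne_zero k hp0)
    Subgroup.finiteIndex_of_finite_quotient
  have := IsUltrametricDist.finite_iInf_range_powMonoidHom_pow hp0 hp1
  exact f.finite_ker_of_finiteIndex_range (H := fun k => (powMonoidHom (p ^ k)).range)
    (fun _ _ h => range_powMonoidHom_le_of_dvd (pow_dvd_pow p h)) (fun _ => inferInstance)
    (fun k => finiteIndex_range_powMonoidHom_pi (Fin r) (p ^ k))
    (fun k => range_powMonoidHom_le_comap f (p ^ k))
    (finite_iInf_range_powMonoidHom_pi (Fin r) (p ^ ·))

/-- Proposition 3.6: let `K` be a finite extension of `ℚ_p` with its canonical (normed)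
topology, and `f : (Kˣ)^r → (Kˣ)^r` a continuous group endomorphism.  If the cokernel of `f`
is finite, then so is the kernel of `f`. -/
theorem finite_kernel_of_finite_cokernel_padic
    (p : ℕ) [Fact p.Prime] (K : Type*) [NormedField K] [NormedAlgebra ℚ_[p] K]
    [FiniteDimensional ℚ_[p] K]
    (r : ℕ)
    (f : (Fin r → Kˣ) →* (Fin r → Kˣ)) (hf : Continuous f)
    (hcoker : Finite ((Fin r → Kˣ) ⧸ f.range)) :
    Finite f.ker :=
  finite_kernel_of_finite_cokernel_padic_general p K r f hcoker
end

section
/- Let p be a prime number, let m ≥ 0 be an integer, let F be a finite abelian group with the discrete topology, and let G = F × (ℤ_p)^m with the product topology, where ℤ_p denotes the ring of p-adic integers with its usual (profinite) topology. Let θ : G → G be a continuous group homomorphism. If the cokernel G / im(θ) is finite, then the kernel ker(θ) is finite. -/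
/-!
Because `ℤ_p^m` is torsion-free, `θ` maps `F` into `F`, so `θ` is block upper triangular with
diagonal block `A : ℤ_p^m → ℤ_p^m`. The cokernel of `A` is a quotient of that of `θ`, hence
finite. By continuity and density of `ℤ` in `ℤ_p`, `A` is `ℤ_p`-linear, and a finite cokernel has
rank zero, so rank–nullity forces `ker A = 0`. Then `ker θ` embeds into `F`.
-/

open Function Cardinal

theorem AddMonoidHom.eq_zero_of_finite_of_isAddTorsionFree {F N : Type*} [AddGroup F] [Finite F]
    [AddMonoid N] [IsAddTorsionFree N] (φ : F →+ N) : φ = 0 := by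
  ext x
  apply nsmul_right_injective (Nat.card_pos (α := F)).ne'
  simp only [← map_nsmul, card_nsmul_eq_zero', map_zero, AddMonoidHom.zero_apply, smul_zero]

theorem Module.rank_eq_zero_of_finite (R Q : Type*) [Ring R] [CharZero R] [AddCommGroup Q]
    [Module R Q] [Finite Q] : Module.rank R Q = 0 :=
  rank_eq_zero_iff.mpr fun _ ↦ ⟨Nat.card Q, Nat.cast_ne_zero.mpr Nat.card_pos.ne',
    by rw [Nat.cast_smul_eq_nsmul, card_nsmul_eq_zero']⟩

theorem LinearMap.injective_of_rank_quotient_range_eq_zero {R M : Type*} [CommRing R] [IsDomain R]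
    [AddCommGroup M] [Module R M] [Module.IsTorsionFree R M] (hM : Module.rank R M < ℵ₀)
    (f : M →ₗ[R] M) (h : Module.rank R (M ⧸ range f) = 0) : Injective f := by
  have hrange : Module.rank R (range f) = Module.rank R M := by
    simpa [h] using (range f).rank_quotient_add_rank
  have hker : Module.rank R (ker f) = 0 := by
    have := f.rank_range_add_rank_ker
    rw [hrange] at this
    exact (add_right_inj_of_lt_aleph0 hM).mp (by rwa [add_comm, zero_add])
  exact LinearMap.ker_eq_bot.mp (Submodule.rank_eq_zero.mp hker)

section PadicLinear

variable {p : ℕ} [Fact p.Prime] {M N : Type*}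
  [AddCommGroup M] [Module ℤ_[p] M] [TopologicalSpace M] [ContinuousSMul ℤ_[p] M]
  [AddCommGroup N] [Module ℤ_[p] N] [TopologicalSpace N] [ContinuousSMul ℤ_[p] N] [T2Space N]

theorem AddMonoidHom.map_padicInt_smul (A : M →+ N) (hA : Continuous A) (c : ℤ_[p]) (x : M) :
    A (c • x) = c • A x :=
  congrFun (PadicInt.denseRange_intCast.equalizer (hA.comp (continuous_id.smul continuous_const))
    (continuous_id.smul continuous_const) (funext fun n ↦ by simp [Int.cast_smul_eq_zsmul])) c

def AddMonoidHom.toPadicIntLinearMap (A : M →+ N) (hA : Continuous A) : M →ₗ[ℤ_[p]] N :=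
  { A with map_smul' := A.map_padicInt_smul hA }

end PadicLinear

theorem AddMonoidHom.injective_of_finite_quotient_range_of_continuous {p : ℕ} [Fact p.Prime]
    {M : Type*} [AddCommGroup M] [Module ℤ_[p] M] [Module.Finite ℤ_[p] M]
    [Module.IsTorsionFree ℤ_[p] M] [TopologicalSpace M] [ContinuousSMul ℤ_[p] M] [T2Space M]
    (A : M →+ M) (hA : Continuous A) (hcoker : Finite (M ⧸ A.range)) : Injective A := by
  let L := A.toPadicIntLinearMap (p := p) hA
  have : Finite (M ⧸ LinearMap.range L) := hcoker
  exact L.injective_of_rank_quotient_range_eq_zero (Module.rank_lt_aleph0 _ _)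
    (Module.rank_eq_zero_of_finite _ _)

section Triangular

open AddMonoidHom

variable {F M : Type*} [AddCommGroup F] [AddCommGroup M]

theorem AddMonoidHom.snd_comp_eq_comp_snd [Finite F] [IsAddTorsionFree M]
    (θ : F × M →+ F × M) :
    (snd F M).comp θ = ((snd F M).comp (θ.comp (inr F M))).comp (snd F M) := by
  rw [← coprod_unique ((snd F M).comp θ),
    (((snd F M).comp θ).comp (inl F M)).eq_zero_of_finite_of_isAddTorsionFree]
  ext; simp

variable {θ : F × M →+ F × M} {A : M →+ M} (hθA : (snd F M).comp θ = A.comp (snd F M))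
include hθA

theorem finite_quotient_range_of_snd_comp_eq (hθ : Finite ((F × M) ⧸ θ.range)) :
    Finite (M ⧸ A.range) := by
  have hle : θ.range ≤ A.range.comap (snd F M) := by
    rintro _ ⟨g, rfl⟩
    exact ⟨g.2, (DFunLike.congr_fun hθA g).symm⟩
  exact .of_surjective _ <| QuotientAddGroup.map_surjective_of_surjective _ _ _
    (QuotientAddGroup.mk_surjective.comp Prod.snd_surjective) hle

theorem finite_ker_of_snd_comp_eq [Finite F] (hA : Injective A) : Finite θ.ker := by
  have hsnd : ∀ g : θ.ker, (g : F × M).2 = 0 := by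
    rintro ⟨g, hg⟩
    apply hA
    simpa [mem_ker.mp hg] using (DFunLike.congr_fun hθA g).symm
  exact .of_injective (fun g : θ.ker ↦ (g : F × M).1) fun g h hgh ↦
    Subtype.ext (Prod.ext hgh ((hsnd g).trans (hsnd h).symm))

end Triangular

theorem finite_kernel_of_finite_cokernel_profinite_general
    (p : ℕ) [Fact p.Prime] (m : ℕ)
    (F : Type*) [AddCommGroup F] [Finite F] [TopologicalSpace F]
    (θ : F × (Fin m → ℤ_[p]) →+ F × (Fin m → ℤ_[p])) (hθ : Continuous θ)
    (hcoker : Finite ((F × (Fin m → ℤ_[p])) ⧸ θ.range)) :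
    Finite θ.ker := by
  set A := (AddMonoidHom.snd F _).comp (θ.comp (AddMonoidHom.inr F _))
  have hθA := θ.snd_comp_eq_comp_snd
  have hA : Continuous A := continuous_snd.comp (hθ.comp (Continuous.prodMk_right 0))
  exact finite_ker_of_snd_comp_eq hθA <|
    A.injective_of_finite_quotient_range_of_continuous (p := p) hA
      (finite_quotient_range_of_snd_comp_eq hθA hcoker)

/-- The Claim inside the proof of Proposition 3.6: let `G = F × (ℤ_p)^m` with `F` a finite
(discrete) abelian group and `ℤ_p` the `p`-adic integers.  If a continuous endomorphism
`θ : G → G` has finite cokernel, then it has finite kernel. -/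
theorem finite_kernel_of_finite_cokernel_profinite
    (p : ℕ) [Fact p.Prime] (m : ℕ)
    (F : Type*) [AddCommGroup F] [Finite F] [TopologicalSpace F] [DiscreteTopology F]
    (θ : F × (Fin m → ℤ_[p]) →+ F × (Fin m → ℤ_[p])) (hθ : Continuous θ)
    (hcoker : Finite ((F × (Fin m → ℤ_[p])) ⧸ θ.range)) :
    Finite θ.ker :=
  finite_kernel_of_finite_cokernel_profinite_general p m F θ hθ hcoker
end

section
/- Let G be an abelian group and let H = { f(1) : f is an additive group homomorphism from ℚ to G } be the set of values at 1 of all group homomorphisms ℚ → G. Then H is a divisible subgroup of G, and every divisible subgroup of G is contained in H; in other words, H is the maximal divisible subgroup G_div of G. -/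
private lemma divisible_subgroup_int_div {G : Type*} [AddCommGroup G] (D : AddSubgroup G)
    (hD : ∀ x ∈ D, ∀ n : ℕ, 1 ≤ n → ∃ y ∈ D, n • y = x) :
    ∀ (a : D) (n : ℤ), n ≠ 0 → ∃ y : D, n • y = a := by
  intro a n hn
  rcases lt_trichotomy n 0 with h | h | h
  · obtain ⟨y, hy, hny⟩ := hD a.1 a.2 (-n).toNat (by omega)
    refine ⟨-⟨y, hy⟩, ?_⟩
    apply Subtype.ext
    push_cast
    have : ((-n).toNat : ℤ) = -n := by omega
    rw [← natCast_zsmul] at hny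
    rw [this] at hny
    simpa [neg_zsmul, smul_neg] using hny
  · exact absurd h hn
  · obtain ⟨y, hy, hny⟩ := hD a.1 a.2 n.toNat (by omega)
    refine ⟨⟨y, hy⟩, ?_⟩
    apply Subtype.ext
    rw [← natCast_zsmul] at hny
    have : ((n.toNat : ℤ)) = n := by omega
    rw [this] at hny
    simpa using hny

private def ratHullSubgroup (G : Type*) [AddCommGroup G] : AddSubgroup G where
  carrier := {x : G | ∃ f : ℚ →+ G, f 1 = x}
  zero_mem' := ⟨0, rfl⟩
  add_mem' := by
    rintro a b ⟨f, hf⟩ ⟨g, hg⟩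
    exact ⟨f + g, by simp [hf, hg]⟩
  neg_mem' := by
    rintro a ⟨f, hf⟩
    exact ⟨-f, by simp [hf]⟩

/-- The set `H = { f 1 | f : ℚ →+ G }` of values at `1` of homomorphisms `ℚ → G` is a
divisible subgroup of `G` containing every divisible subgroup of `G`; i.e. it is the maximal
divisible subgroup `G_div`. -/
theorem maximal_divisible_subgroup_eq_image_of_hom_from_rat
    {G : Type*} [AddCommGroup G] :
    ∃ H : AddSubgroup G, (H : Set G) = {x : G | ∃ f : ℚ →+ G, f 1 = x} ∧
      (∀ x ∈ H, ∀ n : ℕ, 1 ≤ n → ∃ y ∈ H, n • y = x) ∧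
      ∀ D : AddSubgroup G, (∀ x ∈ D, ∀ n : ℕ, 1 ≤ n → ∃ y ∈ D, n • y = x) →
        D ≤ H := by
  refine ⟨ratHullSubgroup G, rfl, ?_, ?_⟩
  · intro x hxx n hn
    obtain ⟨f, hf⟩ := hxx
    refine ⟨f (1 / n), ⟨f.comp (AddMonoidHom.mulRight (1/(n:ℚ))), by simp⟩, ?_⟩
    have hn' : (n : ℚ) ≠ 0 := Nat.cast_ne_zero.mpr (by omega)
    rw [← map_nsmul, show n • (1/(n:ℚ)) = 1 by
      rw [nsmul_eq_mul, mul_one_div, div_self hn']]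
    exact hf
  · intro D hD x hx
    -- build DivisibleBy D ℤ
    have key := divisible_subgroup_int_div D hD
    letI : DivisibleBy D ℤ := {
      div := fun a n => if h : n = 0 then 0 else (key a n h).choose
      div_zero := fun a => by simp
      div_cancel := fun {n} a h => by
        simpa [h] using (key a n h).choose_spec }
    haveI : Module.Injective ℤ D := (Module.Baer.of_divisible D).injective
    -- extend z ↦ z • ⟨x, hx⟩ from ℤ to ℚ via ULift
    let ι : ULift.{_} ℤ →ₗ[ℤ] ULift.{_} ℚ :=
      ULift.moduleEquiv.symm.toLinearMap ∘ₗ (Int.castAddHom ℚ).toIntLinearMap ∘ₗ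
        ULift.moduleEquiv.toLinearMap
    have hι : Function.Injective ι := by
      intro a b hab
      have : ((a.down : ℚ)) = b.down := congrArg ULift.down hab
      exact ULift.ext _ _ (by exact_mod_cast this)
    let g : ULift.{_} ℤ →ₗ[ℤ] D :=
      { toFun := fun z => z.down • (⟨x, hx⟩ : D)
        map_add' := by intro a b; simp [add_smul]
        map_smul' := by intro m a; simp [mul_smul, ULift.smul_def] }
    obtain ⟨h, hh⟩ := Module.Injective.out ι hι g
    refine ⟨D.subtype.comp (h.toAddMonoidHom.comp
      (AddEquiv.ulift.symm : ℚ ≃+ ULift ℚ).toAddMonoidHom), ?_⟩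
    have h1 : (AddEquiv.ulift.symm : ℚ ≃+ ULift ℚ) 1 = ι ⟨1⟩ := by
      apply ULift.ext; simp [ι]; rfl
    have := hh ⟨1⟩
    simp only [g] at this
    simp only [AddMonoidHom.coe_comp, Function.comp_apply, AddEquiv.coe_toAddMonoidHom,
      LinearMap.toAddMonoidHom_coe]
    rw [h1, this]
    simp
end

section
/- Let A be an abelian group and suppose there exists a divisible subgroup D of A such that the quotient A/D has finite exponent. Then the abelian group Ext¹_ℤ(ℚ, A) has finite exponent. -/
/-!
Multiplication by `m` on `A` factors as `A → D ↪ A` through the divisible, hence injective,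
subgroup `D`. The additive functor `Ext¹(ℚ, -)` sends it to multiplication by `m` on
`Ext¹(ℚ, A)`, which therefore factors through `Ext¹(ℚ, D) = 0`.
-/

open CategoryTheory Limits

namespace CategoryTheory

section Additivity

variable {ι V W : Type*} [Category V] [Category W] [Preadditive W]

lemma NatTrans.rightOp_add {F G : Vᵒᵖ ⥤ W} (α β : F ⟶ G) :
    NatTrans.rightOp (α + β) = NatTrans.rightOp α + NatTrans.rightOp β :=
  rfl

variable [Preadditive V]

lemma NatTrans.mapHomologicalComplex_add {F G : V ⥤ W} [F.Additive] [G.Additive]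
    (α β : F ⟶ G) (c : ComplexShape ι) :
    NatTrans.mapHomologicalComplex (α + β) c =
      NatTrans.mapHomologicalComplex α c + NatTrans.mapHomologicalComplex β c := by
  ext K i
  rfl

lemma NatTrans.mapHomotopyCategory_add {F G : V ⥤ W} [F.Additive] [G.Additive]
    (α β : F ⟶ G) (c : ComplexShape ι) :
    NatTrans.mapHomotopyCategory (α + β) c =
      NatTrans.mapHomotopyCategory α c + NatTrans.mapHomotopyCategory β c := by
  ext K
  change (HomotopyCategory.quotient W c).map
    ((NatTrans.mapHomologicalComplex (α + β) c).app K.as) = _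
  rw [NatTrans.mapHomologicalComplex_add, NatTrans.app_add, Functor.map_add]
  rfl

end Additivity

lemma NatTrans.leftDerived_add {C D : Type*} [Category C] [Category D] [Abelian C]
    [HasProjectiveResolutions C] [Abelian D] {F G : C ⥤ D} [F.Additive] [G.Additive]
    (α β : F ⟶ G) (n : ℕ) :
    NatTrans.leftDerived (α + β) n = NatTrans.leftDerived α n + NatTrans.leftDerived β n := by
  ext X
  change (HomotopyCategory.homologyFunctor D _ n).map
      ((NatTrans.mapHomotopyCategory (α + β) _).app ((projectiveResolutions C).obj X)) =
    (HomotopyCategory.homologyFunctor D _ n).map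
        ((NatTrans.mapHomotopyCategory α _).app ((projectiveResolutions C).obj X)) +
      (HomotopyCategory.homologyFunctor D _ n).map
        ((NatTrans.mapHomotopyCategory β _).app ((projectiveResolutions C).obj X))
  rw [NatTrans.mapHomotopyCategory_add, NatTrans.app_add, Functor.map_add]

lemma linearYoneda_map_add {R : Type*} [Ring R] {C : Type*} [Category C] [Preadditive C]
    [Linear R C] {Y Z : C} (f g : Y ⟶ Z) :
    (linearYoneda R C).map (f + g) = (linearYoneda R C).map f + (linearYoneda R C).map g := by
  ext W x
  exact Preadditive.comp_add _ _ _ x f g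

end CategoryTheory

section Ext

variable {R : Type*} [Ring R] {C : Type*} [Category C] [Abelian C] [Linear R C]
  [EnoughProjectives C]

instance Ext_obj_additive (n : ℕ) (X : Cᵒᵖ) : ((Ext R C n).obj X).Additive where
  map_add {Y Z f g} := by
    change (NatTrans.leftDerived ((linearYoneda R C).map (f + g)).rightOp n).leftOp.app X = _
    rw [linearYoneda_map_add, NatTrans.rightOp_add, NatTrans.leftDerived_add]
    rfl

lemma isZero_Ext_succ_of_injective (X J : C) [Injective J] (n : ℕ) :
    IsZero (((Ext R C (n + 1)).obj (Opposite.op X)).obj J) := by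
  obtain ⟨P⟩ : Nonempty (ProjectiveResolution X) := HasProjectiveResolution.out
  refine IsZero.of_iso ?_ (P.isoExt (n + 1) J)
  rw [← HomologicalComplex.exactAt_iff_isZero_homology,
    HomologicalComplex.exactAt_iff' _ n (n + 1) (n + 2) (by simp) (by simp),
    ShortComplex.moduleCat_exact_iff]
  intro f hf
  have hP : (P.complex.sc' (n + 2) (n + 1) n).Exact := by
    rw [← HomologicalComplex.exactAt_iff' _ (n + 2) (n + 1) n (by simp) (by simp)]
    exact P.complex_exactAt_succ n
  exact ⟨hP.descToInjective f hf, hP.comp_descToInjective f hf⟩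

lemma Ext_map_comp_eq_zero_of_injective (X : C) {A B J : C} [Injective J] (g : A ⟶ J)
    (h : J ⟶ B) (n : ℕ) : ((Ext R C (n + 1)).obj (Opposite.op X)).map (g ≫ h) = 0 := by
  rw [Functor.map_comp, (isZero_Ext_succ_of_injective X J n).eq_zero_of_tgt
    (((Ext R C (n + 1)).obj (Opposite.op X)).map g), zero_comp]

lemma Ext_nsmul_eq_zero_of_comp_eq_nsmul_id {X A J : C} [Injective J] {m : ℕ} (g : A ⟶ J)
    (h : J ⟶ A) (hgh : g ≫ h = m • 𝟙 A) (n : ℕ)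
    (x : ((Ext R C (n + 1)).obj (Opposite.op X)).obj A) : m • x = 0 := by
  have hzero := Ext_map_comp_eq_zero_of_injective (R := R) X g h n
  rw [hgh, Functor.map_nsmul, CategoryTheory.Functor.map_id] at hzero
  exact congrArg (fun φ => φ.hom x) hzero

end Ext

lemma AddSubgroup.injective_moduleCat_of_divisible {A : Type*} [AddCommGroup A]
    (D : AddSubgroup A) (hD : ∀ x ∈ D, ∀ n : ℕ, 1 ≤ n → ∃ y ∈ D, n • y = x) :
    Injective (ModuleCat.of ℤ D) := by
  have hsurj {n : ℕ} (hn : n ≠ 0) : Function.Surjective fun y : D => n • y := fun x => by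
    obtain ⟨y, hy, hyx⟩ := hD x x.2 n (Nat.one_le_iff_ne_zero.2 hn)
    exact ⟨⟨y, hy⟩, Subtype.ext hyx⟩
  let _ : DivisibleBy D ℕ := divisibleByOfSMulRightSurj D ℕ hsurj
  let _ : DivisibleBy D ℤ := AddGroup.divisibleByIntOfDivisibleByNat D
  exact Module.injective_object_of_injective_module (inj := (Module.Baer.of_divisible D).injective)

lemma AddSubgroup.exists_comp_subtype_eq_nsmul_id {A : Type*} [AddCommGroup A]
    (D : AddSubgroup A) {m : ℕ} (hm : ∀ x : A, m • x ∈ D) :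
    ∃ g : ModuleCat.of ℤ A ⟶ ModuleCat.of ℤ D,
      g ≫ ModuleCat.ofHom D.subtype.toIntLinearMap = m • 𝟙 _ :=
  ⟨ModuleCat.ofHom ((m • AddMonoidHom.id A).codRestrict D hm).toIntLinearMap, rfl⟩

/-- If the abelian group `A` has a divisible subgroup `D` with `A/D` of finite exponent,
then `Ext¹_ℤ(ℚ, A)` has finite exponent. -/
theorem ext_rat_finiteExponent
    (A : Type) [AddCommGroup A]
    (hA : ∃ D : AddSubgroup A, (∀ x ∈ D, ∀ n : ℕ, 1 ≤ n → ∃ y ∈ D, n • y = x) ∧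
      ∃ m : ℕ, 1 ≤ m ∧ ∀ x : A, m • x ∈ D) :
    ∃ e : ℕ, 1 ≤ e ∧
      ∀ x : ((Ext ℤ (ModuleCat ℤ) 1).obj (Opposite.op (ModuleCat.of ℤ ℚ))).obj
        (ModuleCat.of ℤ A), e • x = 0 := by
  obtain ⟨D, hD, m, hm, hmD⟩ := hA
  have := D.injective_moduleCat_of_divisible hD
  obtain ⟨g, hg⟩ := D.exists_comp_subtype_eq_nsmul_id hmD
  exact ⟨m, hm, Ext_nsmul_eq_zero_of_comp_eq_nsmul_id g _ hg 0⟩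
end

section
/- Let 0 → A → B → C → 0 be a short exact sequence of abelian groups (A a subgroup of B and C = B/A), and let m ≥ 1 be an integer with m·x = 0 for all x ∈ C. If the m-torsion subgroup B[m] = { x ∈ B : m·x = 0 } is finite and the quotient A/mA is finite, then C is finite. -/
/-- The content of the proof of Lemma 3.4: given a short exact sequence
`0 → A → B → B/A → 0` of abelian groups with `B/A` killed by `m ≥ 1`, if the `m`-torsion
subgroup `B[m]` is finite and `A/mA` is finite, then `B/A` is finite. -/
theorem finite_quotient_of_finite_torsion_and_finite_mod_m
    {B : Type*} [AddCommGroup B] (A : AddSubgroup B)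
    (m : ℕ) (hm : 1 ≤ m) (hmC : ∀ x : B ⧸ A, m • x = 0)
    (htor : Set.Finite {x : B | m • x = 0})
    (hAm : Finite (↥A ⧸ (smulAddHom ℤ ↥A (m : ℤ)).range)) :
    Finite (B ⧸ A) := by
  set R := (smulAddHom ℤ ↥A (m : ℤ)).range with hR
  have hmem : ∀ x : B, m • x ∈ A := by
    intro x
    have h := hmC (QuotientAddGroup.mk x)
    have h2 : ((m • x : B) : B ⧸ A) = 0 := by
      rw [← h]; exact map_nsmul (QuotientAddGroup.mk' A) m x
    rwa [QuotientAddGroup.eq_zero_iff] at h2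
  let e : B →+ ↥A :=
    { toFun := fun x => ⟨m • x, hmem x⟩
      map_zero' := Subtype.ext (smul_zero m)
      map_add' := fun x y => Subtype.ext (smul_add m x y) }
  let f : B →+ (↥A ⧸ R) := (QuotientAddGroup.mk' R).comp e
  have hf : ∀ a ∈ A, f a = 0 := by
    intro a ha
    have hmemR : (⟨m • a, hmem a⟩ : ↥A) ∈ R := by
      refine ⟨⟨a, ha⟩, Subtype.ext ?_⟩
      simp [natCast_zsmul]
    simpa [f, e, QuotientAddGroup.eq_zero_iff] using hmemR
  let g : (B ⧸ A) →+ (↥A ⧸ R) := QuotientAddGroup.lift A f hf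
  have hker : (g.ker : Set (B ⧸ A)) ⊆
      QuotientAddGroup.mk '' {x : B | m • x = 0} := by
    intro q hq
    obtain ⟨x, rfl⟩ := QuotientAddGroup.mk_surjective q
    have hgx : f x = 0 := hq
    have hx : (⟨m • x, hmem x⟩ : ↥A) ∈ R := by
      simpa [f, e, QuotientAddGroup.eq_zero_iff] using hgx
    obtain ⟨a, ha⟩ := hx
    have ha' : (m : ℤ) • (a : B) = m • x := congrArg Subtype.val ha
    refine ⟨x - a, ?_, ?_⟩
    · have heq : m • (a : B) = m • x := by rw [← natCast_zsmul]; exact ha'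
      rw [Set.mem_setOf_eq, smul_sub, heq, sub_self]
    · rw [QuotientAddGroup.mk_sub]
      simp [QuotientAddGroup.eq_zero_iff, a.2]
  have hkerfin : Finite g.ker := (Set.Finite.subset (htor.image _) hker).to_subtype
  have hquotfin : Finite ((B ⧸ A) ⧸ g.ker) :=
    Finite.of_injective _ (QuotientAddGroup.kerLift_injective g)
  exact Finite.of_equiv _ (AddSubgroup.addGroupEquivQuotientProdAddSubgroup (s := g.ker)).symm
end
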